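/- For a forest Q with n vertices, the Alexander polynomial satisfies Δ(Q) = t^{−n/2} · Σ_{i ≥ 0} b_i(Q) · t^i · (t − 1)^{n − 2i}, where b_i(Q) is the number of matchings in Q of size i (sets of i pairwise non-adjacent edges). -/
import Mathlib


open scoped Classical

noncomputable section

abbrev K : Type := FractionRing (MvPolynomial Bool ℚ)

/-- The element `t^{1/2}`. -/
def S : K := algebraMap (MvPolynomial Bool ℚ) K (MvPolynomial.X false)

/-- The variable `t = (t^{1/2})²` of the Alexander polynomial. -/
def T : K := S ^ 2

/-- A rule assigning a value to every finite simple graph. -/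
abbrev GraphFun : Type 1 :=
  ∀ (V : Type) [Fintype V] [DecidableEq V], SimpleGraph V → K

/-- `v` is a leaf whose unique neighbor is `w`. -/
def IsLeaf {V : Type} (G : SimpleGraph V) (v w : V) : Prop :=
  G.neighborSet v = {w}

/-- The defining recursion of the Alexander polynomial of a forest:
value `1` on the empty graph, `t^{1/2} − t^{−1/2}` on a single vertex,
the leaf-removal recursion `Δ(Q) = (t^{1/2}−t^{−1/2})Δ(Q−v) + Δ(Q−{v,ṽ})`,
and multiplicativity over disjoint unions. -/
def AlexRules (f : GraphFun) : Prop :=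
  (∀ (V : Type) [Fintype V] [DecidableEq V] (G : SimpleGraph V),
      IsEmpty V → f V G = 1) ∧
  (∀ (V : Type) [Fintype V] [DecidableEq V] (G : SimpleGraph V),
      Fintype.card V = 1 → f V G = S - S⁻¹) ∧
  (∀ (V : Type) [Fintype V] [DecidableEq V] (G : SimpleGraph V),
      G.IsAcyclic → ∀ v w : V, IsLeaf G v w →
      f V G = (S - S⁻¹) * f ↥{x : V | x ≠ v} (G.induce {x : V | x ≠ v}) +
        f ↥{x : V | x ≠ v ∧ x ≠ w} (G.induce {x : V | x ≠ v ∧ x ≠ w})) ∧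
  (∀ (V : Type) [Fintype V] [DecidableEq V] (G : SimpleGraph V),
      G.IsAcyclic → ∀ s : Set V, (∀ x ∈ s, ∀ y ∉ s, ¬ G.Adj x y) →
      f V G = f ↥s (G.induce s) * f ↥sᶜ (G.induce sᶜ))

/-- `M` is a matching of `G`: a set of edges, no two sharing an endpoint. -/
def IsMatching {V : Type} (G : SimpleGraph V) (M : Finset (Sym2 V)) : Prop :=
  (∀ e ∈ M, e ∈ G.edgeSet) ∧ ∀ e ∈ M, ∀ e' ∈ M, e ≠ e' → ∀ x : V, x ∈ e → x ∉ e'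

/-- `b_i(Q)`: the number of matchings of size `i` in `G`. -/
def matchCount {V : Type} [Fintype V] [DecidableEq V] (G : SimpleGraph V) (i : ℕ) : ℕ :=
  Set.ncard {M : Finset (Sym2 V) | M.card = i ∧ IsMatching G M}

/-! ### Auxiliary lemmas -/

set_option linter.unusedSectionVars false

lemma S_ne_zero : S ≠ 0 := by
  simp only [S, ne_eq, map_eq_zero_iff _ (IsFractionRing.injective (MvPolynomial Bool ℚ) K)]
  exact MvPolynomial.X_ne_zero _

lemma SmS : S - S⁻¹ = S⁻¹ * (T - 1) := by
  rw [T, mul_sub, mul_one, sq, ← mul_assoc, inv_mul_cancel₀ S_ne_zero, one_mul]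

lemma induce_acyclic {V : Type} {G : SimpleGraph V} (h : G.IsAcyclic) (s : Set V) :
    (G.induce s).IsAcyclic := by
  intro v c hc
  exact h (c.map (SimpleGraph.Embedding.induce s).toHom)
    (hc.map (Subtype.coe_injective))

lemma exists_leaf {V : Type} [Fintype V] {G : SimpleGraph V} (hG : G.IsAcyclic)
    {a b : V} (hab : G.Adj a b) : ∃ v w, IsLeaf G v w := by
  classical
  set L : Set ℕ := {n | ∃ (u u' : V) (p : G.Walk u u'), p.IsPath ∧ p.length = n} with hL
  have h1 : (1 : ℕ) ∈ L := ⟨a, b, SimpleGraph.Walk.cons hab SimpleGraph.Walk.nil,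
    by simp [hab.ne], by simp⟩
  have hbdd : BddAbove L := by
    refine ⟨Fintype.card V, ?_⟩
    rintro n ⟨u, u', p, hp, rfl⟩
    exact le_of_lt hp.length_lt
  have key : ∀ (x y : V) (q : G.Walk x y), q.IsPath → q.length = sSup L →
      ∃ v w, IsLeaf G v w := by
    intro x y q hqp hqlen
    cases q with
    | nil =>
      exfalso
      have := le_csSup hbdd h1
      simp at hqlen
      omega
    | cons h r =>
      rename_i w
      refine ⟨x, w, ?_⟩
      have hr : r.IsPath := hqp.of_cons
      have hu'r : x ∉ r.support := by
        have := hqp.support_nodup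
        simp at this
        exact this.1
      ext c
      simp only [SimpleGraph.mem_neighborSet, Set.mem_singleton_iff]
      constructor
      · intro hadj
        by_contra hcw
        by_cases hcs : c ∈ (SimpleGraph.Walk.cons h r).support
        · have hcv : c ≠ x := fun hc => G.irrefl (hc ▸ hadj)
          have htkp : ((SimpleGraph.Walk.cons h r).takeUntil c hcs).IsPath :=
            hqp.takeUntil hcs
          have hcyc : (SimpleGraph.Walk.cons hadj.symm
              ((SimpleGraph.Walk.cons h r).takeUntil c hcs)).IsCycle := by
            rw [SimpleGraph.Walk.cons_isCycle_iff]
            refine ⟨htkp, ?_⟩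
            intro hmem
            have hmem' := (SimpleGraph.Walk.cons h r).edges_takeUntil_subset hcs hmem
            rw [SimpleGraph.Walk.edges_cons, List.mem_cons] at hmem'
            rcases hmem' with heq | hmem''
            · rw [Sym2.eq_iff] at heq
              rcases heq with ⟨h1, h2⟩ | ⟨h1, h2⟩
              · exact G.irrefl (h1 ▸ hadj)
              · exact hcw h1
            · exact hu'r (SimpleGraph.Walk.snd_mem_support_of_mem_edges r hmem'')
          exact hG _ hcyc
        · have hp2 : (SimpleGraph.Walk.cons hadj.symm (SimpleGraph.Walk.cons h r)).IsPath :=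
            hqp.cons hcs
          have hmem : (SimpleGraph.Walk.cons hadj.symm (SimpleGraph.Walk.cons h r)).length ∈ L :=
            ⟨_, _, _, hp2, rfl⟩
          have h3 := le_csSup hbdd hmem
          simp only [SimpleGraph.Walk.length_cons] at h3 hqlen
          omega
      · rintro rfl
        exact h
  obtain ⟨u, u', p, hp, hlen⟩ := Nat.sSup_mem ⟨1, h1⟩ hbdd
  exact key u' u p.reverse hp.reverse (by rw [SimpleGraph.Walk.length_reverse, hlen])

variable {V : Type} [Fintype V] [DecidableEq V]

lemma matchCount_zero (G : SimpleGraph V) : matchCount G 0 = 1 := by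
  have : {M : Finset (Sym2 V) | M.card = 0 ∧ IsMatching G M} = {∅} := by
    ext M
    simp only [Set.mem_setOf_eq, Set.mem_singleton_iff, Finset.card_eq_zero]
    constructor
    · rintro ⟨rfl, -⟩; rfl
    · rintro rfl
      exact ⟨rfl, ⟨by simp, by simp⟩⟩
  rw [matchCount, this, Set.ncard_singleton]

lemma two_mul_card_le (G : SimpleGraph V) {M : Finset (Sym2 V)} (hM : IsMatching G M) :
    2 * M.card ≤ Fintype.card V := by
  classical
  set tf : Sym2 V → Finset V := fun e => Finset.univ.filter (· ∈ e) with htf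
  have hcard : ∀ e ∈ M, (tf e).card = 2 := by
    intro e he
    have hd : ¬ e.IsDiag := SimpleGraph.not_isDiag_of_mem_edgeSet G (hM.1 e he)
    induction e using Sym2.ind with
    | _ a b =>
      have hab : a ≠ b := by simpa [Sym2.isDiag_iff_proj_eq] using hd
      have : tf s(a, b) = {a, b} := by
        ext x; simp [htf, Sym2.mem_iff]
      rw [this, Finset.card_insert_of_notMem (by simpa using hab), Finset.card_singleton]
  have hdisj : ∀ e ∈ M, ∀ e' ∈ M, e ≠ e' → Disjoint (tf e) (tf e') := by
    intro e he e' he' hne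
    rw [Finset.disjoint_left]
    intro x hx hx'
    simp only [htf, Finset.mem_filter] at hx hx'
    exact hM.2 e he e' he' hne x hx.2 hx'.2
  calc 2 * M.card = ∑ e ∈ M, (tf e).card := by
        rw [Finset.sum_congr rfl hcard, Finset.sum_const, smul_eq_mul, mul_comm]
    _ = (M.biUnion tf).card := (Finset.card_biUnion hdisj).symm
    _ ≤ Fintype.card V := by
        simpa using Finset.card_le_card (Finset.subset_univ (M.biUnion tf))

lemma matchCount_eq_zero (G : SimpleGraph V) {i : ℕ} (h : Fintype.card V < 2 * i) :
    matchCount G i = 0 := by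
  rw [matchCount, Set.ncard_eq_zero (Set.toFinite _)]
  ext M
  simp only [Set.mem_setOf_eq, Set.mem_empty_iff_false, iff_false, not_and]
  rintro rfl hM
  exact absurd (two_mul_card_le G hM) (by omega)

lemma matchCount_edgeless (G : SimpleGraph V) (hG : ∀ a b : V, ¬ G.Adj a b) {i : ℕ}
    (hi : i ≠ 0) : matchCount G i = 0 := by
  rw [matchCount, Set.ncard_eq_zero (Set.toFinite _)]
  ext M
  simp only [Set.mem_setOf_eq, Set.mem_empty_iff_false, iff_false, not_and]
  rintro rfl hM
  obtain ⟨e, he⟩ := Finset.card_pos.mp (Nat.pos_of_ne_zero hi)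
  have := hM.1 e he
  induction e using Sym2.ind with
  | _ a b => exact hG a b (by simpa using this)

/-- The embedding of `Sym2 ↥s` into `Sym2 V`. -/
def sEmb (s : Set V) : Sym2 ↥s ↪ Sym2 V :=
  ⟨Sym2.map (↑), Sym2.map.injective Subtype.coe_injective⟩

lemma edge_induce_iff (G : SimpleGraph V) (s : Set V) (e' : Sym2 ↥s) :
    e' ∈ (G.induce s).edgeSet ↔ Sym2.map (Subtype.val) e' ∈ G.edgeSet := by
  induction e' using Sym2.ind with
  | _ a b => simp [Sym2.map_pair_eq]

lemma matching_map_iff (G : SimpleGraph V) (s : Set V) (M' : Finset (Sym2 ↥s)) :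
    IsMatching (G.induce s) M' ↔ IsMatching G (M'.map (sEmb s)) := by
  constructor
  · rintro ⟨h1, h2⟩
    constructor
    · intro e he
      rw [Finset.mem_map] at he
      obtain ⟨e', he', rfl⟩ := he
      exact (edge_induce_iff G s e').1 (h1 e' he')
    · intro e he f hf hne x hxe hxf
      rw [Finset.mem_map] at he hf
      obtain ⟨e', he', rfl⟩ := he
      obtain ⟨f', hf', rfl⟩ := hf
      have hne' : e' ≠ f' := fun h => hne (by rw [h])
      obtain ⟨y, hy, hyx⟩ := Sym2.mem_map.mp hxe
      obtain ⟨z, hz, hzx⟩ := Sym2.mem_map.mp hxf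
      have : z = y := Subtype.coe_injective (hzx.trans hyx.symm)
      exact h2 e' he' f' hf' hne' y hy (this ▸ hz)
  · rintro ⟨h1, h2⟩
    constructor
    · intro e' he'
      exact (edge_induce_iff G s e').2 (h1 _ (Finset.mem_map_of_mem _ he'))
    · intro e' he' f' hf' hne' y hy hyf
      have hne : (sEmb s) e' ≠ (sEmb s) f' := fun h => hne' ((sEmb s).injective h)
      exact h2 _ (Finset.mem_map_of_mem _ he') _ (Finset.mem_map_of_mem _ hf') hne
        ↑y (Sym2.mem_map.mpr ⟨y, hy, rfl⟩) (Sym2.mem_map.mpr ⟨y, hyf, rfl⟩)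

lemma matchCount_induce (G : SimpleGraph V) (s : Set V) (i : ℕ) :
    matchCount (G.induce s) i =
      Set.ncard {M : Finset (Sym2 V) | M.card = i ∧ IsMatching G M ∧
        ∀ e ∈ M, ∀ x ∈ e, x ∈ s} := by
  rw [matchCount,
    ← Set.ncard_image_of_injective _ (Finset.map_injective (sEmb s))]
  congr 1
  ext M
  constructor
  · rintro ⟨M', ⟨hcard, hmatch⟩, rfl⟩
    refine ⟨by simp [hcard], (matching_map_iff G s M').1 hmatch, ?_⟩
    intro e he x hx
    rw [Finset.mem_map] at he
    obtain ⟨e', -, rfl⟩ := he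
    obtain ⟨y, -, rfl⟩ := Sym2.mem_map.mp hx
    exact y.2
  · rintro ⟨hcard, hmatch, hsupp⟩
    refine ⟨Finset.univ.filter (fun e' => (sEmb s) e' ∈ M), ?_, ?_⟩
    · have hmap : (Finset.univ.filter (fun e' => (sEmb s) e' ∈ M)).map (sEmb s) = M := by
        ext e
        simp only [Finset.mem_map, Finset.mem_filter, Finset.mem_univ, true_and]
        constructor
        · rintro ⟨e', he', rfl⟩; exact he'
        · intro he
          have hesupp : ∀ x ∈ e, x ∈ s := hsupp e he
          induction e using Sym2.ind with
          | _ a b =>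
            refine ⟨s(⟨a, hesupp a (by simp)⟩, ⟨b, hesupp b (by simp)⟩), ?_, ?_⟩
            · simpa [sEmb, Sym2.map_pair_eq] using he
            · simp [sEmb, Sym2.map_pair_eq]
      refine ⟨?_, (matching_map_iff G s _).2 (by rw [hmap]; exact hmatch)⟩
      have := congrArg Finset.card hmap
      rw [Finset.card_map] at this
      omega
    · ext e
      simp only [Finset.mem_map, Finset.mem_filter, Finset.mem_univ, true_and]
      constructor
      · rintro ⟨e', he', rfl⟩; exact he'
      · intro he
        have hesupp : ∀ x ∈ e, x ∈ s := hsupp e he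
        induction e using Sym2.ind with
        | _ a b =>
          refine ⟨s(⟨a, hesupp a (by simp)⟩, ⟨b, hesupp b (by simp)⟩), ?_, ?_⟩
          · simpa [sEmb, Sym2.map_pair_eq] using he
          · simp [sEmb, Sym2.map_pair_eq]

lemma isMatching_subset {G : SimpleGraph V} {M N : Finset (Sym2 V)}
    (h : IsMatching G M) (hNM : N ⊆ M) : IsMatching G N :=
  ⟨fun e he => h.1 e (hNM he),
   fun e he f hf hne x hx => h.2 e (hNM he) f (hNM hf) hne x hx⟩

lemma matchCount_leaf (G : SimpleGraph V) {v w : V} (hl : IsLeaf G v w) (i : ℕ) :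
    matchCount G (i + 1) = matchCount (G.induce {x : V | x ≠ v}) (i + 1) +
      matchCount (G.induce {x : V | x ≠ v ∧ x ≠ w}) i := by
  have hadj : G.Adj v w := by
    have : w ∈ G.neighborSet v := by rw [hl]; rfl
    exact this
  have huniq : ∀ u : V, G.Adj v u → u = w := by
    intro u hu
    have : u ∈ G.neighborSet v := hu
    rwa [hl, Set.mem_singleton_iff] at this
  refine Eq.trans (b := Set.ncard {M : Finset (Sym2 V) | M.card = i + 1 ∧ IsMatching G M ∧
      ∀ e ∈ M, ∀ x ∈ e, x ∈ {x : V | x ≠ v}} + Set.ncard {M : Finset (Sym2 V) | M.card = i ∧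
      IsMatching G M ∧ ∀ e ∈ M, ∀ x ∈ e, x ∈ {x : V | x ≠ v ∧ x ≠ w}}) ?_
      (congrArg₂ HAdd.hAdd (matchCount_induce G {x : V | x ≠ v} (i + 1)).symm
        (matchCount_induce G {x : V | x ≠ v ∧ x ≠ w} i).symm)
  rw [matchCount]
  set A := {M : Finset (Sym2 V) | M.card = i + 1 ∧ IsMatching G M ∧
    ∀ e ∈ M, ∀ x ∈ e, x ∈ {x : V | x ≠ v}} with hA
  set C := {M : Finset (Sym2 V) | M.card = i ∧ IsMatching G M ∧
    ∀ e ∈ M, ∀ x ∈ e, x ∈ {x : V | x ≠ v ∧ x ≠ w}} with hC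
  have he₀C : ∀ M ∈ C, s(v, w) ∉ M := by
    rintro M ⟨-, -, hsupp⟩ he
    exact (hsupp s(v, w) he v (by simp)).1 rfl
  have hinj : Set.InjOn (insert s(v, w)) C := by
    intro M₁ h₁ M₂ h₂ heq
    have := congrArg (Finset.erase · s(v, w)) heq
    simpa [Finset.erase_insert (he₀C M₁ h₁), Finset.erase_insert (he₀C M₂ h₂)] using this
  have hdisj : Disjoint A (insert s(v, w) '' C) := by
    rw [Set.disjoint_left]
    rintro M ⟨-, -, hsupp⟩ ⟨M', -, rfl⟩
    exact (hsupp s(v, w) (Finset.mem_insert_self _ _) v (by simp)) rfl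
  have hunion : {M : Finset (Sym2 V) | M.card = i + 1 ∧ IsMatching G M} =
      A ∪ (insert s(v, w) '' C) := by
    ext M
    simp only [Set.mem_setOf_eq, Set.mem_union, Set.mem_image, hA, hC]
    constructor
    · rintro ⟨hcard, hmatch⟩
      by_cases hav : ∀ e ∈ M, ∀ x ∈ e, x ≠ v
      · exact Or.inl ⟨hcard, hmatch, hav⟩
      · push_neg at hav
        obtain ⟨e, he, x, hx, hxv⟩ := hav
        have hv : v ∈ e := hxv ▸ hx
        obtain ⟨u, rfl⟩ := Sym2.mem_iff_exists.mp hv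
        have hu : u = w := huniq u (by simpa using hmatch.1 _ he)
        rw [hu] at he
        refine Or.inr ⟨M.erase s(v, w), ⟨?_,
          isMatching_subset hmatch (Finset.erase_subset _ _), ?_⟩, ?_⟩
        · rw [Finset.card_erase_of_mem he, hcard]; omega
        · intro e' he' y hy
          rw [Finset.mem_erase] at he'
          constructor
          · intro hyv
            exact hmatch.2 s(v, w) he e' he'.2 (fun h => he'.1 h.symm) v (by simp) (hyv ▸ hy)
          · intro hyw
            exact hmatch.2 s(v, w) he e' he'.2 (fun h => he'.1 h.symm) w (by simp) (hyw ▸ hy)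
        · exact Finset.insert_erase he
    · rintro (⟨hcard, hmatch, -⟩ | ⟨M', ⟨hcard, hmatch, hsupp⟩, rfl⟩)
      · exact ⟨hcard, hmatch⟩
      · have he₀M : s(v, w) ∉ M' := by
          intro h
          exact (hsupp s(v, w) h v (by simp)).1 rfl
        refine ⟨by rw [Finset.card_insert_of_notMem he₀M, hcard], ?_, ?_⟩
        · intro e he
          rcases Finset.mem_insert.mp he with heq | he
          · rw [heq]; exact hadj
          · exact hmatch.1 e he
        · intro e he f hf hne x hx
          rcases Finset.mem_insert.mp he with heq | he
          · rcases Finset.mem_insert.mp hf with heq' | hf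
            · exact absurd (heq.trans heq'.symm) hne
            · rw [heq] at hx
              intro hxf
              rcases Sym2.mem_iff.mp hx with h1 | h1
              · exact (hsupp f hf x hxf).1 h1
              · exact (hsupp f hf x hxf).2 h1
          · rcases Finset.mem_insert.mp hf with heq' | hf
            · rw [heq']
              intro hxf
              rcases Sym2.mem_iff.mp hxf with h1 | h1
              · exact (hsupp e he x hx).1 h1
              · exact (hsupp e he x hx).2 h1
            · exact hmatch.2 e he f hf hne x hx
  rw [hunion, Set.ncard_union_eq hdisj (Set.toFinite _) (Set.toFinite _),
    Set.ncard_image_of_injOn hinj]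

lemma card_ne (v : V) : Fintype.card ↥{x : V | x ≠ v} = Fintype.card V - 1 := by
  rw [Fintype.card_congr (Equiv.subtypeEquivRight (fun x => Iff.rfl) :
    ↥{x : V | x ≠ v} ≃ {x : V // x ≠ v})]
  rw [Fintype.card_subtype]
  rw [Finset.filter_ne' Finset.univ v, Finset.card_erase_of_mem (Finset.mem_univ v),
    Finset.card_univ]

lemma card_ne2 {v w : V} (hvw : v ≠ w) :
    Fintype.card ↥{x : V | x ≠ v ∧ x ≠ w} = Fintype.card V - 2 := by
  rw [Fintype.card_congr (Equiv.subtypeEquivRight (fun x => Iff.rfl) :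
    ↥{x : V | x ≠ v ∧ x ≠ w} ≃ {x : V // x ≠ v ∧ x ≠ w})]
  rw [Fintype.card_subtype]
  have : Finset.univ.filter (fun x : V => x ≠ v ∧ x ≠ w) = (Finset.univ.erase v).erase w := by
    ext x; simp [and_comm]
  rw [this, Finset.card_erase_of_mem (by simp [hvw.symm]),
    Finset.card_erase_of_mem (Finset.mem_univ v), Finset.card_univ]
  omega

lemma card_compl_ne (v : V) : Fintype.card ↥({x : V | x ≠ v}ᶜ) = 1 := by
  rw [Fintype.card_congr (Equiv.subtypeEquivRight (fun x => by simp) :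
    ↥({x : V | x ≠ v}ᶜ) ≃ {x : V // x = v})]
  exact Fintype.card_subtype_eq v

lemma sum_edgeless (H : SimpleGraph V) (hH : ∀ a b : V, ¬ H.Adj a b) (k : ℕ) :
    ∑ i ∈ Finset.range (k + 1), (matchCount H i : K) * T ^ i * (T - 1) ^ (k - 2 * i)
      = (T - 1) ^ k := by
  rw [Finset.sum_eq_single 0]
  · simp [matchCount_zero]
  · intro i _ hne
    rw [matchCount_edgeless H hH hne]
    push_cast
    ring
  · intro h
    exact absurd (Finset.mem_range.mpr (by omega)) h

lemma key_lemma (f : GraphFun) (hf : AlexRules f) :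
    ∀ (n : ℕ) (V : Type) [Fintype V] [DecidableEq V] (G : SimpleGraph V),
      G.IsAcyclic → Fintype.card V = n →
      f V G = (S⁻¹) ^ n * ∑ i ∈ Finset.range (n + 1),
        (matchCount G i : K) * T ^ i * (T - 1) ^ (n - 2 * i) := by
  obtain ⟨hempty, hsingle, hleaf, hunion⟩ := hf
  intro n
  induction n using Nat.strong_induction_on with
  | _ n IH =>
  intro V _ _ G hforest hn
  rcases Nat.eq_zero_or_pos n with hn0 | hnpos
  · subst hn0
    have hE : IsEmpty V := Fintype.card_eq_zero_iff.mp hn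
    rw [hempty V G hE]
    simp [matchCount_zero]
  by_cases hedge : ∃ a b : V, G.Adj a b
  · -- leaf case
    obtain ⟨a, b, hab⟩ := hedge
    obtain ⟨v, w, hl⟩ := exists_leaf hforest hab
    have hadj : G.Adj v w := by
      have : w ∈ G.neighborSet v := by rw [hl]; rfl
      exact this
    have hvw : v ≠ w := hadj.ne
    have h2n : 2 ≤ n := by
      rw [← hn]
      have : Nontrivial V := ⟨⟨v, w, hvw⟩⟩
      exact Fintype.one_lt_card
    obtain ⟨m, rfl⟩ : ∃ m, n = m + 2 := ⟨n - 2, by omega⟩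
    have hcard1 : Fintype.card ↥{x : V | x ≠ v} = m + 1 := by rw [card_ne, hn]; omega
    have hcard2 : Fintype.card ↥{x : V | x ≠ v ∧ x ≠ w} = m := by rw [card_ne2 hvw, hn]; omega
    have hsplit := hleaf V G hforest v w hl
    have hind1 := IH (m + 1) (by omega) ↥{x : V | x ≠ v}
      (G.induce {x : V | x ≠ v}) (induce_acyclic hforest _) hcard1
    have hind2 := IH m (by omega) ↥{x : V | x ≠ v ∧ x ≠ w}
      (G.induce {x : V | x ≠ v ∧ x ≠ w}) (induce_acyclic hforest _) hcard2
    rw [hsplit, hind1, hind2, SmS]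
    have hTS : (S⁻¹) ^ m = (S⁻¹) ^ (m + 2) * T := by
      rw [T, pow_add, mul_assoc, ← mul_pow, inv_mul_cancel₀ S_ne_zero, one_pow, mul_one]
    have hstep1 : (T - 1) * ∑ i ∈ Finset.range (m + 1 + 1),
        (matchCount (G.induce {x : V | x ≠ v}) i : K) * T ^ i * (T - 1) ^ (m + 1 - 2 * i)
        = ∑ i ∈ Finset.range (m + 1 + 1),
        (matchCount (G.induce {x : V | x ≠ v}) i : K) * T ^ i * (T - 1) ^ (m + 2 - 2 * i) := by
      rw [Finset.mul_sum]
      refine Finset.sum_congr rfl ?_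
      intro i _
      by_cases h2 : 2 * i ≤ m + 1
      · have he : m + 2 - 2 * i = (m + 1 - 2 * i) + 1 := by omega
        rw [he, pow_succ]
        ring
      · have h0 : matchCount (G.induce {x : V | x ≠ v}) i = 0 :=
          matchCount_eq_zero _ (by rw [hcard1]; omega)
        rw [h0]
        push_cast
        ring
    have keysum : ∑ i ∈ Finset.range (m + 2 + 1),
        (matchCount G i : K) * T ^ i * (T - 1) ^ (m + 2 - 2 * i)
        = ∑ i ∈ Finset.range (m + 1 + 1),
            (matchCount (G.induce {x : V | x ≠ v}) i : K) * T ^ i * (T - 1) ^ (m + 2 - 2 * i)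
          + T * ∑ i ∈ Finset.range (m + 1),
            (matchCount (G.induce {x : V | x ≠ v ∧ x ≠ w}) i : K) * T ^ i *
              (T - 1) ^ (m - 2 * i) := by
      rw [Finset.sum_range_succ'
        (fun i => (matchCount G i : K) * T ^ i * (T - 1) ^ (m + 2 - 2 * i)) (m + 2)]
      rw [Finset.sum_range_succ'
        (fun i => (matchCount (G.induce {x : V | x ≠ v}) i : K) * T ^ i *
          (T - 1) ^ (m + 2 - 2 * i)) (m + 1)]
      have hpt : ∀ i ∈ Finset.range (m + 2),
          (matchCount G (i + 1) : K) * T ^ (i + 1) * (T - 1) ^ (m + 2 - 2 * (i + 1))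
          = (matchCount (G.induce {x : V | x ≠ v}) (i + 1) : K) * T ^ (i + 1) *
              (T - 1) ^ (m + 2 - 2 * (i + 1))
            + T * ((matchCount (G.induce {x : V | x ≠ v ∧ x ≠ w}) i : K) * T ^ i *
              (T - 1) ^ (m - 2 * i)) := by
        intro i _
        have hexp : m + 2 - 2 * (i + 1) = m - 2 * i := by omega
        rw [hexp, matchCount_leaf G hl i]
        push_cast
        ring
      rw [Finset.sum_congr rfl hpt, Finset.sum_add_distrib]
      have hz1 : (matchCount (G.induce {x : V | x ≠ v}) (m + 1 + 1) : K) * T ^ (m + 1 + 1) *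
          (T - 1) ^ (m + 2 - 2 * (m + 1 + 1)) = 0 := by
        rw [matchCount_eq_zero _ (by rw [hcard1]; omega)]
        push_cast
        ring
      have hz2 : T * ((matchCount (G.induce {x : V | x ≠ v ∧ x ≠ w}) (m + 1) : K) *
          T ^ (m + 1) * (T - 1) ^ (m - 2 * (m + 1))) = 0 := by
        rw [matchCount_eq_zero _ (by rw [hcard2]; omega)]
        push_cast
        ring
      rw [Finset.sum_range_succ (fun i =>
        (matchCount (G.induce {x : V | x ≠ v}) (i + 1) : K) * T ^ (i + 1) *
          (T - 1) ^ (m + 2 - 2 * (i + 1))) (m + 1)]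
      rw [Finset.sum_range_succ (fun i =>
        T * ((matchCount (G.induce {x : V | x ≠ v ∧ x ≠ w}) i : K) * T ^ i *
          (T - 1) ^ (m - 2 * i))) (m + 1)]
      rw [hz1, hz2, ← Finset.mul_sum]
      have h00 : (matchCount G 0 : K) = 1 := by rw [matchCount_zero]; norm_num
      have h01 : (matchCount (G.induce {x : V | x ≠ v}) 0 : K) = 1 := by
        rw [matchCount_zero]; norm_num
      rw [h00, h01]
      ring
    rw [← hstep1] at keysum
    rw [keysum, hTS]
    ring
  · -- edgeless case
    push_neg at hedge
    obtain ⟨m, rfl⟩ : ∃ m, n = m + 1 := ⟨n - 1, by omega⟩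
    have hV : Nonempty V := Fintype.card_pos_iff.mp (by omega)
    obtain ⟨v⟩ := hV
    have hcross : ∀ x ∈ {x : V | x ≠ v}, ∀ y ∉ {x : V | x ≠ v}, ¬ G.Adj x y :=
      fun x _ y _ h => hedge x y h
    have hsplit := hunion V G hforest {x : V | x ≠ v} hcross
    have hcard1 : Fintype.card ↥{x : V | x ≠ v} = m := by rw [card_ne, hn]; omega
    have hind := IH m (by omega) ↥{x : V | x ≠ v}
      (G.induce {x : V | x ≠ v}) (induce_acyclic hforest _) hcard1
    have h1 : f ↥({x : V | x ≠ v}ᶜ) (G.induce ({x : V | x ≠ v}ᶜ)) = S - S⁻¹ :=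
      hsingle _ _ (card_compl_ne v)
    have hel : ∀ a b : ↥{x : V | x ≠ v}, ¬ (G.induce {x : V | x ≠ v}).Adj a b :=
      fun a b h => hedge a b (by simpa using h)
    rw [hsplit]
    have key2 : f ↥{x : V | x ≠ v} (G.induce {x : V | x ≠ v}) *
        f ↥({x : V | x ≠ v}ᶜ) (G.induce ({x : V | x ≠ v}ᶜ)) =
        (S⁻¹) ^ (m + 1) * ∑ i ∈ Finset.range (m + 1 + 1),
          (matchCount G i : K) * T ^ i * (T - 1) ^ (m + 1 - 2 * i) := by
      rw [hind, h1, sum_edgeless _ hel m, sum_edgeless G hedge (m + 1), SmS, pow_succ]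
      ring
    convert key2 using 2 <;> congr!

/-- `Δ(Q) = t^{−n/2} Σ_i b_i(Q) t^i (t−1)^{n−2i}` where `b_i(Q)` is the number of
matchings of size `i` in the forest `Q` on `n` vertices. -/
theorem alexander_matching_formula (f : GraphFun) (hf : AlexRules f)
    {V : Type} [Fintype V] [DecidableEq V] (G : SimpleGraph V)
    (hforest : G.IsAcyclic) (n : ℕ) (hn : Fintype.card V = n) :
    f V G = (S⁻¹) ^ n *
      ∑ i ∈ Finset.range (n + 1),
        (matchCount G i : K) * T ^ i * (T - 1) ^ (n - 2 * i) := by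
  exact key_lemma f hf n V G hforest hn
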